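/- Let a, c be complex numbers with a ∉ {0, 1, −1} and c ≠ 0, and let x₄ ≠ 0, x₃ = a(a²−1)²/x₄. Define the 9×9 matrix R̂ in block form (blocks of sizes 1,2,3,2,1 on the graded basis) as [1], [[0, a²/c],[c, 1−a²]], [[0,0,a⁴/c²],[0,a,x₃],[c²,x₄,(a+1)(a−1)²]], [[0, a²/c],[c, 1−a²]], [1]. Then R̂ satisfies the braid relation R̂₁R̂₂R̂₁ = R̂₂R̂₁R̂₂. -/
import Mathlib


open Matrix Polynomial

noncomputable section

/-- `R̂ ⊗ 1` acting on `V ⊗ V ⊗ V` with `V = ℂ^3`. -/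
def R1 (R : Matrix (Fin 3 × Fin 3) (Fin 3 × Fin 3) ℂ) :
    Matrix (Fin 3 × Fin 3 × Fin 3) (Fin 3 × Fin 3 × Fin 3) ℂ :=
  fun p q => R (p.1, p.2.1) (q.1, q.2.1) * (if p.2.2 = q.2.2 then 1 else 0)

/-- `1 ⊗ R̂` acting on `V ⊗ V ⊗ V` with `V = ℂ^3`. -/
def R2 (R : Matrix (Fin 3 × Fin 3) (Fin 3 × Fin 3) ℂ) :
    Matrix (Fin 3 × Fin 3 × Fin 3) (Fin 3 × Fin 3 × Fin 3) ℂ :=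
  fun p q => (if p.1 = q.1 then 1 else 0) * R (p.2.1, p.2.2) (q.2.1, q.2.2)

/-- The braid relation `R̂₁R̂₂R̂₁ = R̂₂R̂₁R̂₂`. -/
def Braid (R : Matrix (Fin 3 × Fin 3) (Fin 3 × Fin 3) ℂ) : Prop :=
  R1 R * R2 R * R1 R = R2 R * R1 R * R2 R

/-- position within the charge-1 sector: |10⟩, |01⟩. -/
def f1 (p : Fin 3 × Fin 3) : Fin 2 := if p = (1, 0) then 0 else 1

/-- position within the charge-2 sector: |20⟩, |11⟩, |02⟩. -/
def f2 (p : Fin 3 × Fin 3) : Fin 3 := if p = (2, 0) then 0 else if p = (1, 1) then 1 else 2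

/-- position within the charge-3 sector: |21⟩, |12⟩. -/
def f3 (p : Fin 3 × Fin 3) : Fin 2 := if p = (2, 1) then 0 else 1

/-- The 9×9 matrix with blocks of sizes 1,2,3,2,1 on the graded basis
|00⟩,|10⟩,|01⟩,|20⟩,|11⟩,|02⟩,|21⟩,|12⟩,|22⟩. -/
def blockR (b0 : ℂ) (B1 : Matrix (Fin 2) (Fin 2) ℂ) (B2 : Matrix (Fin 3) (Fin 3) ℂ)
    (B3 : Matrix (Fin 2) (Fin 2) ℂ) (b4 : ℂ) : Matrix (Fin 3 × Fin 3) (Fin 3 × Fin 3) ℂ :=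
  fun p q =>
    if (p.1 : ℕ) + (p.2 : ℕ) ≠ (q.1 : ℕ) + (q.2 : ℕ) then 0
    else if (p.1 : ℕ) + (p.2 : ℕ) = 0 then b0
    else if (p.1 : ℕ) + (p.2 : ℕ) = 1 then B1 (f1 p) (f1 q)
    else if (p.1 : ℕ) + (p.2 : ℕ) = 2 then B2 (f2 p) (f2 q)
    else if (p.1 : ℕ) + (p.2 : ℕ) = 3 then B3 (f3 p) (f3 q)
    else b4

def g (a c x4 : ℂ) : ℕ → ℕ → ℕ → ℕ → ℂ
  | 0, 0, 0, 0 => 1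
  | 0, 1, 1, 0 => c
  | 0, 1, 0, 1 => 1 - a ^ 2
  | 1, 0, 0, 1 => a ^ 2 / c
  | 0, 2, 2, 0 => c ^ 2
  | 0, 2, 1, 1 => x4
  | 0, 2, 0, 2 => (a + 1) * (a - 1) ^ 2
  | 1, 1, 1, 1 => a
  | 1, 1, 0, 2 => a * (a ^ 2 - 1) ^ 2 / x4
  | 2, 0, 0, 2 => a ^ 4 / c ^ 2
  | 1, 2, 2, 1 => c
  | 1, 2, 1, 2 => 1 - a ^ 2
  | 2, 1, 1, 2 => a ^ 2 / c
  | 2, 2, 2, 2 => 1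
  | _, _, _, _ => 0

@[simp] lemma g_0000 (a c x4 : ℂ) : g a c x4 0 0 0 0 = 1 := rfl
@[simp] lemma g_0001 (a c x4 : ℂ) : g a c x4 0 0 0 1 = 0 := rfl
@[simp] lemma g_0002 (a c x4 : ℂ) : g a c x4 0 0 0 2 = 0 := rfl
@[simp] lemma g_0010 (a c x4 : ℂ) : g a c x4 0 0 1 0 = 0 := rfl
@[simp] lemma g_0011 (a c x4 : ℂ) : g a c x4 0 0 1 1 = 0 := rfl
@[simp] lemma g_0012 (a c x4 : ℂ) : g a c x4 0 0 1 2 = 0 := rfl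
@[simp] lemma g_0020 (a c x4 : ℂ) : g a c x4 0 0 2 0 = 0 := rfl
@[simp] lemma g_0021 (a c x4 : ℂ) : g a c x4 0 0 2 1 = 0 := rfl
@[simp] lemma g_0022 (a c x4 : ℂ) : g a c x4 0 0 2 2 = 0 := rfl
@[simp] lemma g_0100 (a c x4 : ℂ) : g a c x4 0 1 0 0 = 0 := rfl
@[simp] lemma g_0101 (a c x4 : ℂ) : g a c x4 0 1 0 1 = 1 - a ^ 2 := rfl
@[simp] lemma g_0102 (a c x4 : ℂ) : g a c x4 0 1 0 2 = 0 := rfl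
@[simp] lemma g_0110 (a c x4 : ℂ) : g a c x4 0 1 1 0 = c := rfl
@[simp] lemma g_0111 (a c x4 : ℂ) : g a c x4 0 1 1 1 = 0 := rfl
@[simp] lemma g_0112 (a c x4 : ℂ) : g a c x4 0 1 1 2 = 0 := rfl
@[simp] lemma g_0120 (a c x4 : ℂ) : g a c x4 0 1 2 0 = 0 := rfl
@[simp] lemma g_0121 (a c x4 : ℂ) : g a c x4 0 1 2 1 = 0 := rfl
@[simp] lemma g_0122 (a c x4 : ℂ) : g a c x4 0 1 2 2 = 0 := rfl
@[simp] lemma g_0200 (a c x4 : ℂ) : g a c x4 0 2 0 0 = 0 := rfl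
@[simp] lemma g_0201 (a c x4 : ℂ) : g a c x4 0 2 0 1 = 0 := rfl
@[simp] lemma g_0202 (a c x4 : ℂ) : g a c x4 0 2 0 2 = (a + 1) * (a - 1) ^ 2 := rfl
@[simp] lemma g_0210 (a c x4 : ℂ) : g a c x4 0 2 1 0 = 0 := rfl
@[simp] lemma g_0211 (a c x4 : ℂ) : g a c x4 0 2 1 1 = x4 := rfl
@[simp] lemma g_0212 (a c x4 : ℂ) : g a c x4 0 2 1 2 = 0 := rfl
@[simp] lemma g_0220 (a c x4 : ℂ) : g a c x4 0 2 2 0 = c ^ 2 := rfl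
@[simp] lemma g_0221 (a c x4 : ℂ) : g a c x4 0 2 2 1 = 0 := rfl
@[simp] lemma g_0222 (a c x4 : ℂ) : g a c x4 0 2 2 2 = 0 := rfl
@[simp] lemma g_1000 (a c x4 : ℂ) : g a c x4 1 0 0 0 = 0 := rfl
@[simp] lemma g_1001 (a c x4 : ℂ) : g a c x4 1 0 0 1 = a ^ 2 / c := rfl
@[simp] lemma g_1002 (a c x4 : ℂ) : g a c x4 1 0 0 2 = 0 := rfl
@[simp] lemma g_1010 (a c x4 : ℂ) : g a c x4 1 0 1 0 = 0 := rfl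
@[simp] lemma g_1011 (a c x4 : ℂ) : g a c x4 1 0 1 1 = 0 := rfl
@[simp] lemma g_1012 (a c x4 : ℂ) : g a c x4 1 0 1 2 = 0 := rfl
@[simp] lemma g_1020 (a c x4 : ℂ) : g a c x4 1 0 2 0 = 0 := rfl
@[simp] lemma g_1021 (a c x4 : ℂ) : g a c x4 1 0 2 1 = 0 := rfl
@[simp] lemma g_1022 (a c x4 : ℂ) : g a c x4 1 0 2 2 = 0 := rfl
@[simp] lemma g_1100 (a c x4 : ℂ) : g a c x4 1 1 0 0 = 0 := rfl
@[simp] lemma g_1101 (a c x4 : ℂ) : g a c x4 1 1 0 1 = 0 := rfl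
@[simp] lemma g_1102 (a c x4 : ℂ) : g a c x4 1 1 0 2 = a * (a ^ 2 - 1) ^ 2 / x4 := rfl
@[simp] lemma g_1110 (a c x4 : ℂ) : g a c x4 1 1 1 0 = 0 := rfl
@[simp] lemma g_1111 (a c x4 : ℂ) : g a c x4 1 1 1 1 = a := rfl
@[simp] lemma g_1112 (a c x4 : ℂ) : g a c x4 1 1 1 2 = 0 := rfl
@[simp] lemma g_1120 (a c x4 : ℂ) : g a c x4 1 1 2 0 = 0 := rfl
@[simp] lemma g_1121 (a c x4 : ℂ) : g a c x4 1 1 2 1 = 0 := rfl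
@[simp] lemma g_1122 (a c x4 : ℂ) : g a c x4 1 1 2 2 = 0 := rfl
@[simp] lemma g_1200 (a c x4 : ℂ) : g a c x4 1 2 0 0 = 0 := rfl
@[simp] lemma g_1201 (a c x4 : ℂ) : g a c x4 1 2 0 1 = 0 := rfl
@[simp] lemma g_1202 (a c x4 : ℂ) : g a c x4 1 2 0 2 = 0 := rfl
@[simp] lemma g_1210 (a c x4 : ℂ) : g a c x4 1 2 1 0 = 0 := rfl
@[simp] lemma g_1211 (a c x4 : ℂ) : g a c x4 1 2 1 1 = 0 := rfl
@[simp] lemma g_1212 (a c x4 : ℂ) : g a c x4 1 2 1 2 = 1 - a ^ 2 := rfl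
@[simp] lemma g_1220 (a c x4 : ℂ) : g a c x4 1 2 2 0 = 0 := rfl
@[simp] lemma g_1221 (a c x4 : ℂ) : g a c x4 1 2 2 1 = c := rfl
@[simp] lemma g_1222 (a c x4 : ℂ) : g a c x4 1 2 2 2 = 0 := rfl
@[simp] lemma g_2000 (a c x4 : ℂ) : g a c x4 2 0 0 0 = 0 := rfl
@[simp] lemma g_2001 (a c x4 : ℂ) : g a c x4 2 0 0 1 = 0 := rfl
@[simp] lemma g_2002 (a c x4 : ℂ) : g a c x4 2 0 0 2 = a ^ 4 / c ^ 2 := rfl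
@[simp] lemma g_2010 (a c x4 : ℂ) : g a c x4 2 0 1 0 = 0 := rfl
@[simp] lemma g_2011 (a c x4 : ℂ) : g a c x4 2 0 1 1 = 0 := rfl
@[simp] lemma g_2012 (a c x4 : ℂ) : g a c x4 2 0 1 2 = 0 := rfl
@[simp] lemma g_2020 (a c x4 : ℂ) : g a c x4 2 0 2 0 = 0 := rfl
@[simp] lemma g_2021 (a c x4 : ℂ) : g a c x4 2 0 2 1 = 0 := rfl
@[simp] lemma g_2022 (a c x4 : ℂ) : g a c x4 2 0 2 2 = 0 := rfl
@[simp] lemma g_2100 (a c x4 : ℂ) : g a c x4 2 1 0 0 = 0 := rfl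
@[simp] lemma g_2101 (a c x4 : ℂ) : g a c x4 2 1 0 1 = 0 := rfl
@[simp] lemma g_2102 (a c x4 : ℂ) : g a c x4 2 1 0 2 = 0 := rfl
@[simp] lemma g_2110 (a c x4 : ℂ) : g a c x4 2 1 1 0 = 0 := rfl
@[simp] lemma g_2111 (a c x4 : ℂ) : g a c x4 2 1 1 1 = 0 := rfl
@[simp] lemma g_2112 (a c x4 : ℂ) : g a c x4 2 1 1 2 = a ^ 2 / c := rfl
@[simp] lemma g_2120 (a c x4 : ℂ) : g a c x4 2 1 2 0 = 0 := rfl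
@[simp] lemma g_2121 (a c x4 : ℂ) : g a c x4 2 1 2 1 = 0 := rfl
@[simp] lemma g_2122 (a c x4 : ℂ) : g a c x4 2 1 2 2 = 0 := rfl
@[simp] lemma g_2200 (a c x4 : ℂ) : g a c x4 2 2 0 0 = 0 := rfl
@[simp] lemma g_2201 (a c x4 : ℂ) : g a c x4 2 2 0 1 = 0 := rfl
@[simp] lemma g_2202 (a c x4 : ℂ) : g a c x4 2 2 0 2 = 0 := rfl
@[simp] lemma g_2210 (a c x4 : ℂ) : g a c x4 2 2 1 0 = 0 := rfl
@[simp] lemma g_2211 (a c x4 : ℂ) : g a c x4 2 2 1 1 = 0 := rfl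
@[simp] lemma g_2212 (a c x4 : ℂ) : g a c x4 2 2 1 2 = 0 := rfl
@[simp] lemma g_2220 (a c x4 : ℂ) : g a c x4 2 2 2 0 = 0 := rfl
@[simp] lemma g_2221 (a c x4 : ℂ) : g a c x4 2 2 2 1 = 0 := rfl
@[simp] lemma g_2222 (a c x4 : ℂ) : g a c x4 2 2 2 2 = 1 := rfl

def Ef (a c x4 : ℂ) : Matrix (Fin 3 × Fin 3) (Fin 3 × Fin 3) ℂ :=
  fun p q => g a c x4 p.1 p.2 q.1 q.2

set_option maxHeartbeats 1000000 in
lemma hEf (a c x4 : ℂ) :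
    blockR 1 !![0, a ^ 2 / c; c, 1 - a ^ 2]
      !![0, 0, a ^ 4 / c ^ 2; 0, a, a * (a ^ 2 - 1) ^ 2 / x4; c ^ 2, x4, (a + 1) * (a - 1) ^ 2]
      !![0, a ^ 2 / c; c, 1 - a ^ 2] 1 = Ef a c x4 := by
  ext ⟨i, j⟩ ⟨k, l⟩
  fin_cases i <;> fin_cases j <;> fin_cases k <;> fin_cases l <;>
    simp (config := {decide := true}) [blockR, f1, f2, f3, Ef]

set_option maxHeartbeats 1000000 in
lemma L1 (M : Matrix (Fin 3 × Fin 3) (Fin 3 × Fin 3) ℂ) (i j k l m n : Fin 3) :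
    (R1 M * R2 M * R1 M) (i,j,k) (l,m,n) =
      ∑ x : Fin 3, ∑ y : Fin 3, ∑ v : Fin 3,
        M (i,j) (x,y) * M (y,k) (v,n) * M (x,v) (l,m) := by
  simp only [Matrix.mul_apply, Fintype.sum_prod_type, Fin.sum_univ_three, R1, R2,
    mul_ite, ite_mul, mul_one, one_mul, mul_zero, zero_mul]
  fin_cases k <;> fin_cases n <;> simp <;> ring

set_option maxHeartbeats 1000000 in
lemma L2 (M : Matrix (Fin 3 × Fin 3) (Fin 3 × Fin 3) ℂ) (i j k l m n : Fin 3) :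
    (R2 M * R1 M * R2 M) (i,j,k) (l,m,n) =
      ∑ y : Fin 3, ∑ z : Fin 3, ∑ v : Fin 3,
        M (j,k) (y,z) * M (i,y) (l,v) * M (v,z) (m,n) := by
  simp only [Matrix.mul_apply, Fintype.sum_prod_type, Fin.sum_univ_three, R1, R2,
    mul_ite, ite_mul, mul_one, one_mul, mul_zero, zero_mul]
  fin_cases i <;> fin_cases l <;> simp <;> ring

set_option maxHeartbeats 4000000 in
/-- solution 3.1.1 satisfies the braid relation. -/
theorem sol311_braid (a c x4 : ℂ) (ha0 : a ≠ 0) (ha1 : a ≠ 1) (ham1 : a ≠ -1)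
    (hc : c ≠ 0) (hx4 : x4 ≠ 0) :
    Braid (blockR 1 !![0, a ^ 2 / c; c, 1 - a ^ 2]
      !![0, 0, a ^ 4 / c ^ 2; 0, a, a * (a ^ 2 - 1) ^ 2 / x4; c ^ 2, x4, (a + 1) * (a - 1) ^ 2]
      !![0, a ^ 2 / c; c, 1 - a ^ 2] 1) := by
  rw [hEf]
  unfold Braid
  ext ⟨i, j, k⟩ ⟨l, m, n⟩
  rw [L1, L2]
  fin_cases i <;> fin_cases j <;> fin_cases k <;> fin_cases l <;> fin_cases m <;> fin_cases n <;>
    · simp [Ef, Fin.sum_univ_three]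
      try field_simp
      try ring
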